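/- (Saturation) The class of weak equivalences satisfies the saturation axiom (for composable morphisms f and g in 𝒞, whenever two of f, g, and gf are weak equivalences, so is the third) if and only if 𝒵 ∩ 𝒞 has the 2-out-of-3 property for short exact sequences in 𝒞 (whenever two of the three terms of a short exact sequence in 𝒞 lie in 𝒵 ∩ 𝒞, so does the third). -/

import Mathlib

open CategoryTheory CategoryTheory.Limits

universe v u

variable {𝒜 : Type u} [Category.{v} 𝒜] [Abelian 𝒜]

/-- `(f, g)` forms a short exact sequence `0 ⟶ X ⟶ Y ⟶ Z ⟶ 0` in the ambient
abelian category `𝒜`. -/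
def IsShortExactSeq {X Y Z : 𝒜} (f : X ⟶ Y) (g : Y ⟶ Z) : Prop :=
  ∃ w : f ≫ g = 0, (ShortComplex.mk f g w).ShortExact

/-- A class of objects is closed under isomorphisms. -/
def IsoClosed (P : 𝒜 → Prop) : Prop := ∀ ⦃X Y : 𝒜⦄, (X ≅ Y) → P X → P Y

/-- `Ext¹(X, Y) = 0` relative to the exact subcategory determined by `E`:
every short exact sequence `0 ⟶ Y ⟶ M ⟶ X ⟶ 0` in `E` splits. -/
def Ext1IsZero (E : 𝒜 → Prop) (X Y : 𝒜) : Prop :=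
  ∀ ⦃M : 𝒜⦄ (f : Y ⟶ M) (g : M ⟶ X), E M → IsShortExactSeq f g →
    ∃ r : M ⟶ Y, f ≫ r = 𝟙 Y

/-- `(C, I)` is a cotorsion pair in the exact subcategory of `𝒜` determined by
the class of objects `E`: the two classes are each other's orthogonal
complement with respect to `Ext¹`. -/
structure IsCotorsionPair (E C I : 𝒜 → Prop) : Prop where
  right_eq : ∀ Y, I Y ↔ (E Y ∧ ∀ ⦃X⦄, C X → Ext1IsZero E X Y)
  left_eq : ∀ X, C X ↔ (E X ∧ ∀ ⦃Y⦄, I Y → Ext1IsZero E X Y)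

/-- The cotorsion pair `(C, I)` in `E` is complete: every object of `E` admits
both kinds of approximation sequences. -/
def IsCompleteCP (E C I : 𝒜 → Prop) : Prop :=
  (∀ A, E A → ∃ (Y P : 𝒜) (f : A ⟶ Y) (g : Y ⟶ P),
      I Y ∧ C P ∧ IsShortExactSeq f g) ∧
  (∀ A, E A → ∃ (Y P : 𝒜) (f : Y ⟶ P) (g : P ⟶ A),
      I Y ∧ C P ∧ IsShortExactSeq f g)

/-- The cotorsion pair is hereditary: `C` is closed under kernels of
admissible epimorphisms in `E`. -/
def IsHereditaryCP (E C : 𝒜 → Prop) : Prop :=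
  ∀ ⦃X Y Z : 𝒜⦄ (f : X ⟶ Y) (g : Y ⟶ Z),
    IsShortExactSeq f g → E X → C Y → C Z → C X

/-- A cofibration: an admissible monomorphism between objects of `C` whose
cokernel lies in `C`. -/
def IsCofib (C : 𝒜 → Prop) {X Y : 𝒜} (f : X ⟶ Y) : Prop :=
  C X ∧ C Y ∧ ∃ (W : 𝒜) (g : Y ⟶ W), C W ∧ IsShortExactSeq f g

/-- An acyclic fibration: an admissible epimorphism in `E` whose kernel lies
in `I`. -/
def IsAcyclicFib (E I : 𝒜 → Prop) {Y Z : 𝒜} (g : Y ⟶ Z) : Prop :=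
  E Y ∧ E Z ∧ ∃ (K : 𝒜) (k : K ⟶ Y), I K ∧ IsShortExactSeq k g

/-- An acyclic cofibration: an admissible monomorphism between objects of `C`
whose cokernel lies in `C ∩ Z`. -/
def IsAcyclicCofib (C Zc : 𝒜 → Prop) {X Y : 𝒜} (f : X ⟶ Y) : Prop :=
  C X ∧ C Y ∧ ∃ (W : 𝒜) (g : Y ⟶ W), C W ∧ Zc W ∧ IsShortExactSeq f g

/-- A weak equivalence: a morphism between objects of `C` that factors as an
acyclic cofibration followed by an acyclic fibration. -/
def IsWeakEquiv (E C I Zc : 𝒜 → Prop) {X Y : 𝒜} (f : X ⟶ Y) : Prop :=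
  C X ∧ C Y ∧ ∃ (M : 𝒜) (i : X ⟶ M) (p : M ⟶ Y),
    IsAcyclicCofib C Zc i ∧ IsAcyclicFib E I p ∧ i ≫ p = f

/-- The standing setup: a complete hereditary cotorsion pair `(Cc, Ip)` in the
exact subcategory of `𝒜` determined by the isomorphism-closed,
extension-closed class `E`, together with an isomorphism-closed class
`Zc ⊆ E` with `Ip ⊆ Zc`, such that `Zc ∩ Cc` is closed under extensions and
under cokernels of admissible monomorphisms in `Cc`. -/
structure CotorsionSetup (E Cc Ip Zc : 𝒜 → Prop) : Prop where
  isoE : IsoClosed E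
  isoC : IsoClosed Cc
  isoI : IsoClosed Ip
  isoZ : IsoClosed Zc
  extClosedE : ∀ ⦃X Y Z : 𝒜⦄ (f : X ⟶ Y) (g : Y ⟶ Z),
    IsShortExactSeq f g → E X → E Z → E Y
  cp : IsCotorsionPair E Cc Ip
  complete : IsCompleteCP E Cc Ip
  hereditary : IsHereditaryCP E Cc
  zSubE : ∀ ⦃X⦄, Zc X → E X
  iSubZ : ∀ ⦃X⦄, Ip X → Zc X
  zcExtClosed : ∀ ⦃X Y Z : 𝒜⦄ (f : X ⟶ Y) (g : Y ⟶ Z), IsShortExactSeq f g →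
    Cc X → Cc Y → Cc Z → Zc X → Zc Z → Zc Y
  zcCokerClosed : ∀ ⦃X Y Z : 𝒜⦄ (f : X ⟶ Y) (g : Y ⟶ Z), IsShortExactSeq f g →
    Cc X → Cc Y → Cc Z → Zc X → Zc Y → Zc Z


/-!
A morphism `h` of `Cc` is a weak equivalence iff for one, equivalently every, factorization
`h = j ≫ q` into an admissible monomorphism with cokernel `W ∈ Cc` and an admissible epimorphism
with kernel in `Cc ∩ Zc`, the cokernel `W` lies in `Zc`. Two such factorizations are compared
through the pullback of their epimorphisms: the cokernel of the induced map into it is an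
extension of each of the two cokernels by a kernel in `Cc ∩ Zc`. For composable `f` and `g` the
factorizations can be chosen so that their cokernels form a short exact sequence
`Q_f ↪ Q_{f ≫ g} ↠ Q_g` in `Cc`, which turns the 2-out-of-3 property of `Zc ∩ Cc` into
saturation.

Conversely, closure of `Zc ∩ Cc` under extensions and cokernels is part of the setup, and closure
under kernels follows from saturation: for `A ↪ B ↠ C`, pulling a special `Cc`-precover of `B` back
along `A ↪ B` exhibits a weak equivalence that is a cofibration with cokernel `A`.
-/

namespace IsShortExactSeq

variable {X Y Z T : 𝒜} {f : X ⟶ Y} {g : Y ⟶ Z}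

theorem w (h : IsShortExactSeq f g) : f ≫ g = 0 := h.1

theorem mono (h : IsShortExactSeq f g) : Mono f := h.2.mono_f

theorem epi (h : IsShortExactSeq f g) : Epi g := h.2.epi_g

theorem exists_lift (h : IsShortExactSeq f g) (t : T ⟶ Y) (ht : t ≫ g = 0) :
    ∃ u : T ⟶ X, u ≫ f = t :=
  have := h.mono
  ⟨h.2.exact.lift t ht, h.2.exact.lift_f t ht⟩

theorem exists_desc (h : IsShortExactSeq f g) (t : Y ⟶ T) (ht : f ≫ t = 0) :
    ∃ u : Z ⟶ T, g ≫ u = t :=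
  have := h.epi
  ⟨h.2.exact.desc t ht, h.2.exact.g_desc t ht⟩

theorem of_exists_lift (w : f ≫ g = 0) [Mono f] [Epi g]
    (H : ∀ {T : 𝒜} (t : T ⟶ Y), t ≫ g = 0 → ∃ u : T ⟶ X, u ≫ f = t) :
    IsShortExactSeq f g :=
  ⟨w, .mk' (ShortComplex.exact_of_f_is_kernel _
    (KernelFork.IsLimit.ofι' f w fun t ht => ⟨_, (H t ht).choose_spec⟩)) ‹_› ‹_›⟩

theorem of_exists_desc (w : f ≫ g = 0) [Mono f] [Epi g]
    (H : ∀ {T : 𝒜} (t : Y ⟶ T), f ≫ t = 0 → ∃ u : Z ⟶ T, g ≫ u = t) :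
    IsShortExactSeq f g :=
  ⟨w, .mk' (ShortComplex.exact_of_g_is_cokernel _
    (CokernelCofork.IsColimit.ofπ' g w fun t ht => ⟨_, (H t ht).choose_spec⟩)) ‹_› ‹_›⟩

end IsShortExactSeq

theorem isShortExactSeq_cokernel {X Y : 𝒜} (f : X ⟶ Y) [Mono f] :
    IsShortExactSeq f (cokernel.π f) :=
  .of_exists_desc (cokernel.condition f) fun t ht => ⟨cokernel.desc f t ht, cokernel.π_desc f t ht⟩

theorem isShortExactSeq_inl_snd (A B : 𝒜) :
    IsShortExactSeq (biprod.inl : A ⟶ A ⊞ B) biprod.snd :=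
  .of_exists_lift biprod.inl_snd fun t ht =>
    ⟨t ≫ biprod.fst, by ext <;> simp [ht]⟩

theorem isShortExactSeq_inr_fst (A B : 𝒜) :
    IsShortExactSeq (biprod.inr : B ⟶ A ⊞ B) biprod.fst :=
  .of_exists_lift biprod.inr_fst fun t ht =>
    ⟨t ≫ biprod.snd, by ext <;> simp [ht]⟩

theorem IsShortExactSeq.biprod_map_id {X Y Z : 𝒜} {f : X ⟶ Y} {g : Y ⟶ Z}
    (h : IsShortExactSeq f g) (K : 𝒜) :
    IsShortExactSeq (biprod.map f (𝟙 K)) (biprod.fst ≫ g) := by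
  have := h.mono
  have := h.epi
  refine .of_exists_lift (by ext <;> simp [h.w]) fun t ht => ?_
  obtain ⟨u, hu⟩ := h.exists_lift (t ≫ biprod.fst) (by simpa using ht)
  exact ⟨biprod.lift u (t ≫ biprod.snd), by ext <;> simp [hu]⟩

section Pullback

variable {P X Y Z K : 𝒜} {fst : P ⟶ X} {snd : P ⟶ Y} {p : X ⟶ Z} {q : Y ⟶ Z}

theorem CategoryTheory.IsPullback.exists_isShortExactSeq (sq : IsPullback fst snd p q) {κ : K ⟶ X}
    (hκp : IsShortExactSeq κ p) : ∃ k : K ⟶ P, k ≫ fst = κ ∧ IsShortExactSeq k snd := by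
  have := hκp.mono
  have := hκp.epi
  have hk := sq.lift_fst κ 0 (by simp [hκp.w])
  have : Mono (sq.lift κ 0 (by simp [hκp.w])) := mono_of_mono_fac hk
  have : Epi snd := by rw [← sq.isoPullback_hom_snd]; infer_instance
  refine ⟨_, hk, .of_exists_lift (sq.lift_snd _ _ _) fun t ht => ?_⟩
  obtain ⟨u, hu⟩ := hκp.exists_lift (t ≫ fst) (by rw [Category.assoc, sq.w, reassoc_of% ht,
    zero_comp])
  exact ⟨u, sq.hom_ext (by simp [hu]) (by simp [ht])⟩

theorem CategoryTheory.IsPullback.isShortExactSeq_fst (sq : IsPullback fst snd p q) {ψ : Z ⟶ K}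
    (hqψ : IsShortExactSeq q ψ) [Epi p] : IsShortExactSeq fst (p ≫ ψ) := by
  have := hqψ.mono
  have := hqψ.epi
  have := sq.mono_fst_of_mono
  refine .of_exists_lift (by rw [sq.w_assoc, hqψ.w, comp_zero]) fun t ht => ?_
  obtain ⟨u, hu⟩ := hqψ.exists_lift (t ≫ p) (by simpa using ht)
  exact ⟨sq.lift t u hu.symm, sq.lift_fst _ _ _⟩

end Pullback

theorem exists_isShortExactSeq_of_fac {K P M X W V : 𝒜} {κ : K ⟶ P} {q : P ⟶ M}
    {j : X ⟶ M} {c : M ⟶ W} {i : X ⟶ P} {π : P ⟶ V}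
    (hκq : IsShortExactSeq κ q) (hjc : IsShortExactSeq j c) (hiπ : IsShortExactSeq i π)
    (hfac : i ≫ q = j) : ∃ v : V ⟶ W, IsShortExactSeq (κ ≫ π) v := by
  have := hjc.mono
  have := hκq.mono
  have := hjc.epi
  have := hκq.epi
  have := hiπ.epi
  obtain ⟨v, hv⟩ := hiπ.exists_desc (q ≫ c) (by rw [reassoc_of% hfac, hjc.w])
  have : Epi v := epi_of_epi_fac hv
  have : Mono (κ ≫ π) := Preadditive.mono_of_cancel_zero _ fun u hu => by
    obtain ⟨u', hu'⟩ := hiπ.exists_lift (u ≫ κ) (by simpa using hu)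
    have : u' ≫ j = 0 := by rw [← hfac, reassoc_of% hu', hκq.w, comp_zero]
    rw [← cancel_mono κ, ← hu', zero_of_comp_mono j this, zero_comp, zero_comp]
  refine ⟨v, .of_exists_desc (by rw [Category.assoc, hv, reassoc_of% hκq.w, zero_comp])
    fun t ht => ?_⟩
  obtain ⟨u, hu⟩ := hκq.exists_desc (π ≫ t) (by simpa using ht)
  obtain ⟨u', hu'⟩ := hjc.exists_desc u (by rw [← hfac, Category.assoc, hu, reassoc_of% hiπ.w,
    zero_comp])
  exact ⟨u', by rw [← cancel_epi π, reassoc_of% hv, hu', hu]⟩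

/-- The third isomorphism theorem. -/
theorem exists_isShortExactSeq_cokernels {X M₁ M₂ W₁ W₂ W : 𝒜} {i₁ : X ⟶ M₁} {q₁ : M₁ ⟶ W₁}
    {i₂ : M₁ ⟶ M₂} {q₂ : M₂ ⟶ W₂} {q : M₂ ⟶ W}
    (h₁ : IsShortExactSeq i₁ q₁) (h₂ : IsShortExactSeq i₂ q₂) (h : IsShortExactSeq (i₁ ≫ i₂) q) :
    ∃ (w₁ : W₁ ⟶ W) (w₂ : W ⟶ W₂), IsShortExactSeq w₁ w₂ := by
  have := h₁.epi
  have := h₂.epi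
  have := h.epi
  have := h₂.mono
  obtain ⟨w₁, hw₁⟩ := h₁.exists_desc (i₂ ≫ q) (by rw [← Category.assoc, h.w])
  obtain ⟨w₂, hw₂⟩ := h.exists_desc q₂ (by rw [Category.assoc, h₂.w, comp_zero])
  have : Epi w₂ := epi_of_epi_fac hw₂
  have : Mono w₁ := Preadditive.mono_of_cancel_zero _ fun {T} u hu => by
    obtain ⟨T', π, _, x, hx⟩ := surjective_up_to_refinements_of_epi q₁ u
    obtain ⟨y, hy⟩ := h.exists_lift (x ≫ i₂) (by rw [Category.assoc, ← hw₁, ← reassoc_of% hx,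
      hu, comp_zero])
    have hxy : x = y ≫ i₁ := by rw [← cancel_mono i₂, Category.assoc, hy]
    rw [← cancel_epi π, hx, hxy, Category.assoc, h₁.w, comp_zero, comp_zero]
  refine ⟨w₁, w₂, .of_exists_desc ?_ fun t ht => ?_⟩
  · rw [← cancel_epi q₁, reassoc_of% hw₁, hw₂, h₂.w, comp_zero]
  · obtain ⟨u, hu⟩ := h₂.exists_desc (q ≫ t) (by rw [← reassoc_of% hw₁, ht, comp_zero])
    exact ⟨u, by rw [← cancel_epi q, reassoc_of% hw₂, hu]⟩

namespace CotorsionSetup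

variable {E Cc Ip Zc : 𝒜 → Prop} (S : CotorsionSetup E Cc Ip Zc)
include S

theorem e_of_cc {X : 𝒜} (h : Cc X) : E X := ((S.cp.left_eq X).1 h).1

theorem e_of_ip {X : 𝒜} (h : Ip X) : E X := ((S.cp.right_eq X).1 h).1

theorem ext1IsZero {X Y : 𝒜} (hX : Cc X) (hY : Ip Y) : Ext1IsZero E X Y :=
  ((S.cp.left_eq X).1 hX).2 hY

/-- The pullback of `q` along `h` is an extension of `X` by `K`, hence splits. -/
theorem exists_lift {K P M X : 𝒜} {κ : K ⟶ P} {q : P ⟶ M} (hκq : IsShortExactSeq κ q)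
    (hK : Ip K) (hX : Cc X) (h : X ⟶ M) : ∃ i : X ⟶ P, i ≫ q = h := by
  have sq := IsPullback.of_hasPullback q h
  obtain ⟨k, -, hk⟩ := sq.exists_isShortExactSeq hκq
  obtain ⟨r, hr⟩ := S.ext1IsZero hX hK k _
    (S.extClosedE _ _ hk (S.e_of_ip hK) (S.e_of_cc hX)) hk
  let σ := ShortComplex.Splitting.ofExactOfRetraction _ hk.2.exact r hr hk.epi
  exact ⟨σ.s ≫ pullback.fst q h, by rw [Category.assoc, pullback.condition,
    ← Category.assoc, σ.s_g, Category.id_comp]⟩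

theorem cc_of_isShortExactSeq {X₁ X X₂ : 𝒜} {a : X₁ ⟶ X} {b : X ⟶ X₂}
    (hab : IsShortExactSeq a b) (h₁ : Cc X₁) (h₂ : Cc X₂) : Cc X := by
  refine (S.cp.left_eq X).2 ⟨S.extClosedE a b hab (S.e_of_cc h₁) (S.e_of_cc h₂), ?_⟩
  intro Y hY M f g _ hfg
  obtain ⟨t, ht⟩ := S.exists_lift hfg hY h₁ a
  have := hab.mono
  have : Mono t := mono_of_mono_fac ht
  obtain ⟨v, hv⟩ := exists_isShortExactSeq_of_fac hfg hab (isShortExactSeq_cokernel t) ht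
  obtain ⟨r, hr⟩ := S.ext1IsZero h₂ hY _ _ (S.extClosedE _ _ hv (S.e_of_ip hY) (S.e_of_cc h₂)) hv
  exact ⟨cokernel.π t ≫ r, by rw [← hr, Category.assoc]⟩

theorem cc_biprod {A B : 𝒜} (hA : Cc A) (hB : Cc B) : Cc (A ⊞ B) :=
  S.cc_of_isShortExactSeq (isShortExactSeq_inl_snd A B) hA hB

/-- `coker ℓ` is an extension of `coker j` by `ker q`. -/
theorem cc_and_zc_iff_of_fac {K P M X V W : 𝒜} {κ : K ⟶ P} {q : P ⟶ M} {ℓ : X ⟶ P}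
    {π : P ⟶ V} {j : X ⟶ M} {c : M ⟶ W} (hκq : IsShortExactSeq κ q) (hK : Cc K) (hZK : Zc K)
    (hℓπ : IsShortExactSeq ℓ π) (hjc : IsShortExactSeq j c) (hW : Cc W) (hfac : ℓ ≫ q = j) :
    Cc V ∧ (Zc V ↔ Zc W) := by
  obtain ⟨v, hv⟩ := exists_isShortExactSeq_of_fac hκq hjc hℓπ hfac
  have hV := S.cc_of_isShortExactSeq hv hK hW
  exact ⟨hV, S.zcCokerClosed _ _ hv hK hV hW hZK, S.zcExtClosed _ _ hv hK hV hW hZK⟩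

/-- Compare both factorizations with the induced map into the pullback of `q` and `q'`. -/
theorem zc_iff_of_fac {X N N' Y W W' K K' : 𝒜} {j : X ⟶ N} {c : N ⟶ W} {κ : K ⟶ N}
    {q : N ⟶ Y} {j' : X ⟶ N'} {c' : N' ⟶ W'} {κ' : K' ⟶ N'} {q' : N' ⟶ Y}
    (hjc : IsShortExactSeq j c) (hW : Cc W) (hκq : IsShortExactSeq κ q) (hK : Cc K)
    (hZK : Zc K) (hjc' : IsShortExactSeq j' c') (hW' : Cc W') (hκq' : IsShortExactSeq κ' q')
    (hK' : Cc K') (hZK' : Zc K') (hfac : j ≫ q = j' ≫ q') : Zc W ↔ Zc W' := by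
  have sq := IsPullback.of_hasPullback q q'
  obtain ⟨k, -, hk⟩ := sq.exists_isShortExactSeq hκq
  obtain ⟨k', -, hk'⟩ := sq.flip.exists_isShortExactSeq hκq'
  have := hjc.mono
  have : Mono (pullback.lift j j' hfac) := mono_of_mono_fac (pullback.lift_fst _ _ _)
  have hℓ := isShortExactSeq_cokernel (pullback.lift j j' hfac)
  exact (S.cc_and_zc_iff_of_fac hk' hK' hZK' hℓ hjc hW (pullback.lift_fst _ _ _)).2.symm.trans
    (S.cc_and_zc_iff_of_fac hk hK hZK hℓ hjc' hW' (pullback.lift_snd _ _ _)).2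

/-- `j = (h, x)` for a special `Ip`-preenvelope `x : X ⟶ K`; then `coker j` is an extension of
`coker x` by `Y`. -/
theorem exists_biprod_fac {X Y : 𝒜} (hX : Cc X) (hY : Cc Y) (h : X ⟶ Y) :
    ∃ (K : 𝒜) (j : X ⟶ Y ⊞ K), Ip K ∧ Cc K ∧ Mono j ∧ Cc (cokernel j) ∧
      j ≫ biprod.fst = h := by
  obtain ⟨K, C, x, c, hK, hC, hxc⟩ := S.complete.1 X (S.e_of_cc hX)
  have := hxc.mono
  have : Mono (biprod.lift h x) := mono_of_mono_fac (biprod.lift_snd h x)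
  obtain ⟨v, hv⟩ := exists_isShortExactSeq_of_fac (isShortExactSeq_inl_snd Y K) hxc
    (isShortExactSeq_cokernel _) (biprod.lift_snd h x)
  exact ⟨K, biprod.lift h x, hK, S.cc_of_isShortExactSeq hxc hX hC, inferInstance,
    S.cc_of_isShortExactSeq hv hY hC, biprod.lift_fst h x⟩

theorem isWeakEquiv_iff {X N Y W K : 𝒜} {h : X ⟶ Y} {j : X ⟶ N} {c : N ⟶ W} {κ : K ⟶ N}
    {q : N ⟶ Y} (hX : Cc X) (hY : Cc Y) (hjc : IsShortExactSeq j c) (hW : Cc W)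
    (hκq : IsShortExactSeq κ q) (hK : Cc K) (hZK : Zc K) (hfac : j ≫ q = h) :
    IsWeakEquiv E Cc Ip Zc h ↔ Zc W := by
  constructor
  · rintro ⟨-, -, M, i, p, ⟨-, hM, W₀, c₀, hW₀, hZW₀, hic⟩, ⟨-, -, K₀, κ₀, hK₀, hκp⟩, hip⟩
    exact (S.zc_iff_of_fac hjc hW hκq hK hZK hic hW₀ hκp
      (S.hereditary _ _ hκp (S.e_of_ip hK₀) hM hY) (S.iSubZ hK₀) (hfac.trans hip.symm)).2 hZW₀
  · intro hZW
    obtain ⟨K₀, j₀, hK₀, hCK₀, _, hQ₀, hj₀⟩ := S.exists_biprod_fac hX hY h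
    have hN₀ := S.cc_biprod hY hCK₀
    have hZQ₀ := (S.zc_iff_of_fac hjc hW hκq hK hZK (isShortExactSeq_cokernel j₀) hQ₀
      (isShortExactSeq_inr_fst Y K₀) hCK₀ (S.iSubZ hK₀) (hfac.trans hj₀.symm)).1 hZW
    exact ⟨hX, hY, Y ⊞ K₀, j₀, biprod.fst,
      ⟨hX, hN₀, _, _, hQ₀, hZQ₀, isShortExactSeq_cokernel j₀⟩,
      ⟨S.e_of_cc hN₀, S.e_of_cc hY, K₀, biprod.inr, hK₀, isShortExactSeq_inr_fst Y K₀⟩, hj₀⟩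

theorem zc_of_isWeakEquiv {X M W : 𝒜} {h : X ⟶ M} {c : M ⟶ W} (hhc : IsShortExactSeq h c)
    (hW : Cc W) (hh : IsWeakEquiv E Cc Ip Zc h) : Zc W := by
  obtain ⟨-, hM, N, i, p, ⟨-, hN, W₀, c₀, -, hZW₀, hic⟩, ⟨-, -, K, κ, hK, hκp⟩, hip⟩ := hh
  exact (S.cc_and_zc_iff_of_fac hκp (S.hereditary _ _ hκp (S.e_of_ip hK) hN hM) (S.iSubZ hK)
    hic hhc hW hip).2.1 hZW₀

theorem isWeakEquiv_of_isAcyclicCofib {X M : 𝒜} {j : X ⟶ M} (hj : IsAcyclicCofib Cc Zc j) :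
    IsWeakEquiv E Cc Ip Zc j := by
  obtain ⟨hX, hM, W, c, hW, hZW, hjc⟩ := hj
  obtain ⟨K, P, κ, q, hK, hP, hκq⟩ := S.complete.2 M (S.e_of_cc hM)
  obtain ⟨i, hi⟩ := S.exists_lift hκq hK hX j
  have := hjc.mono
  have : Mono i := mono_of_mono_fac hi
  obtain ⟨hV, hZV⟩ := S.cc_and_zc_iff_of_fac hκq (S.hereditary _ _ hκq (S.e_of_ip hK) hP hM)
    (S.iSubZ hK) (isShortExactSeq_cokernel i) hjc hW hi
  exact ⟨hX, hM, P, i, q, ⟨hX, hP, _, _, hV, hZV.2 hZW, isShortExactSeq_cokernel i⟩,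
    ⟨S.e_of_cc hP, S.e_of_cc hM, K, κ, hK, hκq⟩, hi⟩

/-- Given a special `Cc`-precover `K ↪ P ↠ B` of `B`, pulling it back along `φ : A ↪ B` writes the
acyclic cofibration `K ↪ P` as `K ↪ V` followed by the acyclic cofibration `V ↪ P`; cancelling
makes `K ↪ V` a weak equivalence, and its cokernel is `A`. -/
theorem zc_of_isShortExactSeq_of_cancel
    (cancel : ∀ ⦃U V T : 𝒜⦄ (f : U ⟶ V) (g : V ⟶ T), IsWeakEquiv E Cc Ip Zc g →
      IsWeakEquiv E Cc Ip Zc (f ≫ g) → IsWeakEquiv E Cc Ip Zc f)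
    {A B C : 𝒜} {φ : A ⟶ B} {ψ : B ⟶ C} (hφψ : IsShortExactSeq φ ψ) (hA : Cc A) (hB : Cc B)
    (hC : Cc C) (hZB : Zc B) (hZC : Zc C) : Zc A := by
  obtain ⟨K, P, κ, q, hK, hP, hκq⟩ := S.complete.2 B (S.e_of_cc hB)
  have hCK := S.hereditary _ _ hκq (S.e_of_ip hK) hP hB
  have := hκq.epi
  have sq := IsPullback.of_hasPullback q φ
  obtain ⟨m, hm, hmA⟩ := sq.exists_isShortExactSeq hκq
  have hV := S.cc_of_isShortExactSeq hmA hCK hA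
  have hκ := S.isWeakEquiv_of_isAcyclicCofib ⟨hCK, hP, B, q, hB, hZB, hκq⟩
  have hfst := S.isWeakEquiv_of_isAcyclicCofib
    ⟨hV, hP, C, q ≫ ψ, hC, hZC, sq.isShortExactSeq_fst hφψ⟩
  exact S.zc_of_isWeakEquiv hmA hA (cancel m _ hfst (hm ▸ hκ))

/-- With `f = j_f ≫ fst` and `g = j_g ≫ fst` as in `exists_biprod_fac`, the composite
`f ≫ g` factors through `J = j_f ≫ (j_g ⊞ 𝟙)`, and `coker J` is an extension of `coker j_g` by
`coker j_f`. -/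
theorem exists_isShortExactSeq_of_comp {X Y Z : 𝒜} (hX : Cc X) (hY : Cc Y) (hZ : Cc Z)
    (f : X ⟶ Y) (g : Y ⟶ Z) :
    ∃ (Q₁ Q Q₂ : 𝒜) (a : Q₁ ⟶ Q) (b : Q ⟶ Q₂), IsShortExactSeq a b ∧
      Cc Q₁ ∧ Cc Q ∧ Cc Q₂ ∧ (IsWeakEquiv E Cc Ip Zc f ↔ Zc Q₁) ∧
      (IsWeakEquiv E Cc Ip Zc g ↔ Zc Q₂) ∧ (IsWeakEquiv E Cc Ip Zc (f ≫ g) ↔ Zc Q) := by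
  obtain ⟨K₁, j₁, hK₁, hCK₁, _, hQ₁, hj₁⟩ := S.exists_biprod_fac hX hY f
  obtain ⟨K₂, j₂, hK₂, hCK₂, _, hQ₂, hj₂⟩ := S.exists_biprod_fac hY hZ g
  let J := j₁ ≫ biprod.map j₂ (𝟙 K₁)
  have hJ := isShortExactSeq_cokernel J
  obtain ⟨a, b, hab⟩ := exists_isShortExactSeq_cokernels (isShortExactSeq_cokernel j₁)
    ((isShortExactSeq_cokernel j₂).biprod_map_id K₁) hJ
  have hQ := S.cc_of_isShortExactSeq hab hQ₁ hQ₂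
  have hCK := S.cc_biprod hCK₂ hCK₁
  have hZK := S.zcExtClosed _ _ (isShortExactSeq_inl_snd K₂ K₁) hCK₂ hCK hCK₁ (S.iSubZ hK₂)
    (S.iSubZ hK₁)
  have hJfac : J ≫ biprod.fst ≫ biprod.fst = f ≫ g := by
    simp only [J, Category.assoc, biprod.map_fst_assoc, reassoc_of% hj₁, hj₂]
  exact ⟨_, _, _, a, b, hab, hQ₁, hQ, hQ₂,
    S.isWeakEquiv_iff hX hY (isShortExactSeq_cokernel j₁) hQ₁ (isShortExactSeq_inr_fst Y K₁)
      hCK₁ (S.iSubZ hK₁) hj₁,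
    S.isWeakEquiv_iff hY hZ (isShortExactSeq_cokernel j₂) hQ₂ (isShortExactSeq_inr_fst Z K₂)
      hCK₂ (S.iSubZ hK₂) hj₂,
    S.isWeakEquiv_iff hX hZ hJ hQ ((isShortExactSeq_inr_fst Z K₂).biprod_map_id K₁) hCK hZK
      hJfac⟩

end CotorsionSetup

/-- **Saturation.** In the standing setup, the class of weak
equivalences satisfies the saturation (2-out-of-3) axiom if and only if
`Zc ∩ Cc` has the 2-out-of-3 property for short exact sequences in `Cc`. -/
theorem saturation_iff_two_out_of_three
    (E Cc Ip Zc : 𝒜 → Prop) (S : CotorsionSetup E Cc Ip Zc) :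
    (∀ ⦃X Y Z : 𝒜⦄ (f : X ⟶ Y) (g : Y ⟶ Z),
      (IsWeakEquiv E Cc Ip Zc f → IsWeakEquiv E Cc Ip Zc g →
        IsWeakEquiv E Cc Ip Zc (f ≫ g)) ∧
      (IsWeakEquiv E Cc Ip Zc f → IsWeakEquiv E Cc Ip Zc (f ≫ g) →
        IsWeakEquiv E Cc Ip Zc g) ∧
      (IsWeakEquiv E Cc Ip Zc g → IsWeakEquiv E Cc Ip Zc (f ≫ g) →
        IsWeakEquiv E Cc Ip Zc f)) ↔
    (∀ ⦃X Y Z : 𝒜⦄ (f : X ⟶ Y) (g : Y ⟶ Z), IsShortExactSeq f g →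
      Cc X → Cc Y → Cc Z →
      ((Zc X → Zc Y → Zc Z) ∧ (Zc X → Zc Z → Zc Y) ∧ (Zc Y → Zc Z → Zc X))) := by
  constructor
  · intro sat X Y Z f g hfg hX hY hZ
    exact ⟨S.zcCokerClosed f g hfg hX hY hZ, S.zcExtClosed f g hfg hX hY hZ,
      S.zc_of_isShortExactSeq_of_cancel (fun _ _ _ f g => (sat f g).2.2) hfg hX hY hZ⟩
  · intro h23 X Y Z f g
    refine ⟨fun hf hg => ?_, fun hf hfg => ?_, fun hg hfg => ?_⟩
    · obtain ⟨_, _, _, a, b, hab, hQ₁, hQ, hQ₂, hf', hg', hfg'⟩ :=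
        S.exists_isShortExactSeq_of_comp hf.1 hf.2.1 hg.2.1 f g
      exact hfg'.2 ((h23 a b hab hQ₁ hQ hQ₂).2.1 (hf'.1 hf) (hg'.1 hg))
    · obtain ⟨_, _, _, a, b, hab, hQ₁, hQ, hQ₂, hf', hg', hfg'⟩ :=
        S.exists_isShortExactSeq_of_comp hf.1 hf.2.1 hfg.2.1 f g
      exact hg'.2 ((h23 a b hab hQ₁ hQ hQ₂).1 (hf'.1 hf) (hfg'.1 hfg))
    · obtain ⟨_, _, _, a, b, hab, hQ₁, hQ, hQ₂, hf', hg', hfg'⟩ :=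
        S.exists_isShortExactSeq_of_comp hfg.1 hg.1 hg.2.1 f g
      exact hf'.2 ((h23 a b hab hQ₁ hQ hQ₂).2.2 (hfg'.1 hfg) (hg'.1 hg))
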